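/- Let f be μ-strongly convex with μ ≥ 0 and let w satisfy f(w) + (1/(2λ))‖w - x‖² ≤ ε²/(2λ) + f_λ(x) (a type-1 ε-approximation of prox_{λf}(x)). Then for all y ∈ H, ε²/(2λ) + f(y) ≥ f(w) + (1/λ)⟨σ + w - x, w - y⟩ + (μ/2)‖w - y‖² + ((1+λμ)/(2λ))‖w - prox_{λf}(x)‖², where σ = (1 + λμ)(prox_{λf}(x) - w). In particular ‖w - prox_{λf}(x)‖ ≤ ε/√(1 + λμ). -/

import Mathlib

open RealInnerProductSpace Set Filter Topology

/-!
The proximal objective `F = f + ‖· - x‖² / (2λ)` is `(μ + 1/λ)`-strongly convex, so its minimizer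
`p = prox_{λf}(x)` satisfies the quadratic growth bound `F p + (μ + 1/λ)/2 ‖y - p‖² ≤ F y`.
Adding `F w ≤ ε²/(2λ) + F p` and expanding the squares around `w` gives the first inequality;
at `y = w` it reads `(1 + λμ)/(2λ) ‖w - p‖² ≤ ε²/(2λ)`.
-/

section StrongConvexity

variable {E : Type*} [NormedAddCommGroup E]

theorem StrongConvexOn.add [NormedSpace ℝ E] {s : Set E} {m n : ℝ} {f g : E → ℝ}
    (hf : StrongConvexOn s m f) (hg : StrongConvexOn s n g) :
    StrongConvexOn s (m + n) (f + g) := by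
  refine (UniformConvexOn.add hf hg).mono fun r => le_of_eq ?_
  simp only [Pi.add_apply]
  ring

theorem StrongConvexOn.add_le_of_isMinOn [NormedSpace ℝ E] {s : Set E} {m : ℝ} {f : E → ℝ}
    {p y : E} (hf : StrongConvexOn s m f) (hp : IsMinOn f s p) (hps : p ∈ s) (hys : y ∈ s) :
    f p + m / 2 * ‖y - p‖ ^ 2 ≤ f y := by
  -- Minimality of `p` against strong convexity at `(1 - t) • y + t • p`, divided by `1 - t`;
  -- then let `t → 1`.
  have hscaled : ∀ t ∈ Ioo (0 : ℝ) 1, t * (m / 2 * ‖y - p‖ ^ 2) ≤ f y - f p := by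
    rintro t ⟨ht0, ht1⟩
    have h1t : 0 ≤ 1 - t := sub_nonneg.2 ht1.le
    have hconv := hf.2 hys hps h1t ht0.le (sub_add_cancel 1 t)
    have hmin : f p ≤ f ((1 - t) • y + t • p) := hp (hf.1 hys hps h1t ht0.le (sub_add_cancel 1 t))
    simp only [smul_eq_mul] at hconv
    refine le_of_mul_le_mul_left ?_ (sub_pos.2 ht1)
    linarith
  have hlim : Tendsto (fun t : ℝ => t * (m / 2 * ‖y - p‖ ^ 2)) (𝓝[<] 1)
      (𝓝 (m / 2 * ‖y - p‖ ^ 2)) :=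
    ((continuous_mul_const _).tendsto' 1 _ (one_mul _)).mono_left nhdsWithin_le_nhds
  have := le_of_tendsto hlim (eventually_of_mem (Ioo_mem_nhdsLT zero_lt_one) hscaled)
  linarith

variable [InnerProductSpace ℝ E]

theorem strongConvexOn_univ_mul_norm_sub_sq (c : ℝ) (x : E) :
    StrongConvexOn univ (2 * c) fun y => c * ‖y - x‖ ^ 2 := by
  rw [strongConvexOn_iff_convex]
  have haffine : (fun y : E => c * ‖y - x‖ ^ 2 - 2 * c / 2 * ‖y‖ ^ 2)
      = fun y => ((-2 * c) • innerₛₗ ℝ x) y + c * ‖x‖ ^ 2 := by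
    funext y
    rw [norm_sub_sq_real, LinearMap.smul_apply, innerₛₗ_apply_apply, smul_eq_mul,
      real_inner_comm]
    ring
  rw [haffine]
  exact (LinearMap.convexOn _ convex_univ).add_const _

end StrongConvexity

theorem inexact_prox_rhs_eq {H : Type*} [NormedAddCommGroup H] [InnerProductSpace ℝ H]
    {lam : ℝ} (hlam : lam ≠ 0) (μ : ℝ) (x w p y : H) :
    (1 / lam) * ⟪(1 + lam * μ) • (p - w) + w - x, w - y⟫ + μ / 2 * ‖w - y‖ ^ 2
        + (1 + lam * μ) / (2 * lam) * ‖w - p‖ ^ 2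
      = ‖w - x‖ ^ 2 / (2 * lam) - ‖y - x‖ ^ 2 / (2 * lam) + (μ + 1 / lam) / 2 * ‖y - p‖ ^ 2 := by
  have hσ : (1 + lam * μ) • (p - w) + w - x = (w - x) - (1 + lam * μ) • (w - p) := by
    match_scalars <;> ring
  rw [hσ, inner_sub_left, real_inner_smul_left, show y - x = (w - x) - (w - y) by abel,
    show y - p = (w - p) - (w - y) by abel, norm_sub_sq_real (w - x), norm_sub_sq_real (w - p)]
  field_simp
  ring

theorem le_div_sqrt_of_mul_sq_le {c r ε : ℝ} (hc : 0 < c) (hr : 0 ≤ r) (hε : 0 ≤ ε)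
    (h : c * r ^ 2 ≤ ε ^ 2) : r ≤ ε / Real.sqrt c := by
  rw [le_div_iff₀ (Real.sqrt_pos.2 hc), ← pow_le_pow_iff_left₀ (by positivity) hε two_ne_zero,
    mul_pow, Real.sq_sqrt hc.le]
  linarith

theorem stmt_9_general {H : Type*} [NormedAddCommGroup H] [InnerProductSpace ℝ H]
    (μ : ℝ) (hμ : 0 ≤ μ)
    (f : H → ℝ) (hf : StrongConvexOn Set.univ μ f)
    (lam ε : ℝ) (hlam : 0 < lam) (hε : 0 < ε) (x w p : H)
    (hp : IsMinOn (fun y => f y + ‖y - x‖ ^ 2 / (2 * lam)) Set.univ p)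
    (hw : f w + ‖w - x‖ ^ 2 / (2 * lam)
      ≤ ε ^ 2 / (2 * lam) + ⨅ y : H, f y + ‖y - x‖ ^ 2 / (2 * lam)) :
    (∀ y : H,
      ε ^ 2 / (2 * lam) + f y
        ≥ f w + (1 / lam) * ⟪(1 + lam * μ) • (p - w) + w - x, w - y⟫
          + μ / 2 * ‖w - y‖ ^ 2 + (1 + lam * μ) / (2 * lam) * ‖w - p‖ ^ 2) ∧
    ‖w - p‖ ≤ ε / Real.sqrt (1 + lam * μ) := by
  set F : H → ℝ := fun y => f y + ‖y - x‖ ^ 2 / (2 * lam)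
  have hF : StrongConvexOn univ (μ + 1 / lam) F := by
    convert hf.add (strongConvexOn_univ_mul_norm_sub_sq (1 / (2 * lam)) x) using 1
    · field_simp
    · funext y
      simp only [F, Pi.add_apply]
      ring
  have hgrowth : ∀ y, F p + (μ + 1 / lam) / 2 * ‖y - p‖ ^ 2 ≤ F y := fun y =>
    hF.add_le_of_isMinOn hp (mem_univ p) (mem_univ y)
  have hinf : ⨅ y, F y = F p :=
    ciInf_eq_of_forall_ge_of_forall_gt_exists_lt (fun y => hp (mem_univ y)) fun _ h => ⟨p, h⟩
  have hineq : ∀ y : H, ε ^ 2 / (2 * lam) + f y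
      ≥ f w + (1 / lam) * ⟪(1 + lam * μ) • (p - w) + w - x, w - y⟫
        + μ / 2 * ‖w - y‖ ^ 2 + (1 + lam * μ) / (2 * lam) * ‖w - p‖ ^ 2 := by
    intro y
    have hgy := hgrowth y
    simp only [F, hinf] at hgy hw
    linarith [inexact_prox_rhs_eq hlam.ne' μ x w p y]
  refine ⟨hineq, le_div_sqrt_of_mul_sq_le (by positivity) (norm_nonneg _) hε.le ?_⟩
  have hbound : (1 + lam * μ) / (2 * lam) * ‖w - p‖ ^ 2 ≤ ε ^ 2 / (2 * lam) := by
    have h := hineq w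
    simp only [sub_self, inner_zero_right, norm_zero] at h
    linarith
  rwa [div_mul_eq_mul_div, div_le_div_iff_of_pos_right (by positivity)] at hbound

/-- Key inequality for type-1 inexact proximal steps (Lemma 2.5 / [Lin2020, Lemma 2.7]). -/
theorem stmt_9 {H : Type*} [NormedAddCommGroup H] [InnerProductSpace ℝ H]
    (μ : ℝ) (hμ : 0 ≤ μ)
    (f : H → ℝ) (hf : StrongConvexOn Set.univ μ f) (hlsc : LowerSemicontinuous f)
    (lam ε : ℝ) (hlam : 0 < lam) (hε : 0 < ε) (x w p : H)
    (hp : IsMinOn (fun y => f y + ‖y - x‖ ^ 2 / (2 * lam)) Set.univ p)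
    (hw : f w + ‖w - x‖ ^ 2 / (2 * lam)
      ≤ ε ^ 2 / (2 * lam) + ⨅ y : H, f y + ‖y - x‖ ^ 2 / (2 * lam)) :
    (∀ y : H,
      ε ^ 2 / (2 * lam) + f y
        ≥ f w + (1 / lam) * ⟪(1 + lam * μ) • (p - w) + w - x, w - y⟫
          + μ / 2 * ‖w - y‖ ^ 2 + (1 + lam * μ) / (2 * lam) * ‖w - p‖ ^ 2) ∧
    ‖w - p‖ ≤ ε / Real.sqrt (1 + lam * μ) :=
  stmt_9_general μ hμ f hf lam ε hlam hε x w p hp hw
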